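/- arXiv:1806.05095 — 3 statements merged into one kernel-verified Lean document; each statement's English description precedes it below -/
import Mathlib

section
/- If X_1, ..., X_n are independent nonnegative random variables, k ≥ 2, E[X_i] = μ_i > 0 for all i, then equality E[(X_{k:n})^{n+1-k}] = Σ_{1≤i_1<...<i_{n+1-k}≤n} μ_{i_1} ⋯ μ_{i_{n+1-k}} cannot hold. -/
open MeasureTheory ProbabilityTheory

/-- The `k`-th order statistic (0-indexed) of the values `X 0 ω, ..., X (n-1) ω`. -/
noncomputable def orderStat {Ω : Type*} {n : ℕ} (X : Fin n → Ω → ℝ) (k : Fin n) (ω : Ω) : ℝ :=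
  X (Tuple.sort (fun i => X i ω) k) ω

/-!
Let `m = n - k` and let `e_m` be the `m`-th elementary symmetric function. The indices of the
`m` largest values form one of the `m`-subsets summed over in `e_m(X)`, so `X_{k:n}^m ≤ e_m(X)`
pointwise, and `E e_m(X) = e_m(μ)` by independence. Since `k ≥ 1` (0-indexed), `m < n`, so
`e_m(X)` has a second term, which is positive whenever all `X_i` are; by independence that event
has probability `∏ P(X_i > 0) > 0`, as each `μ_i > 0`. Hence the inequality is strict after
integrating. If `X_{k:n}^m` is not integrable, its Bochner integral is `0 < e_m(μ)`.
-/

open Finset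

theorem Finset.exists_card_eq_ne {α : Type*} [DecidableEq α] {s : Finset α} (hs : s.Nonempty)
    {j : α} (hj : j ∉ s) : ∃ t : Finset α, #t = #s ∧ t ≠ s := by
  obtain ⟨i, hi⟩ := hs
  refine ⟨insert j (s.erase i), ?_, fun h => hj (h ▸ mem_insert_self j _)⟩
  rw [card_insert_of_notMem (fun h => hj (mem_of_mem_erase h)), card_erase_add_one hi]

theorem MeasureTheory.integral_lt_integral_of_ae_le_of_measure_setOf_lt_ne_zero
    {α : Type*} [MeasurableSpace α] {μ : Measure α} {f g : α → ℝ}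
    (hf : Integrable f μ) (hg : Integrable g μ) (hle : f ≤ᵐ[μ] g)
    (hlt : μ {x | f x < g x} ≠ 0) : ∫ x, f x ∂μ < ∫ x, g x ∂μ := by
  rw [← sub_pos, ← integral_sub hg hf, integral_pos_iff_support_of_nonneg_ae
    (hle.mono fun x => sub_nonneg.2) (hg.sub hf)]
  exact pos_iff_ne_zero.2 (mt (measure_mono_null fun x hx => (sub_pos.2 hx.out).ne') hlt)

section Independence

variable {Ω ι : Type*} [MeasurableSpace Ω] {P : Measure Ω} {X : ι → Ω → ℝ}

theorem ProbabilityTheory.iIndepFun.integrable_finset_prod (hX : iIndepFun X P)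
    (hint : ∀ i, Integrable (X i) P) (s : Finset ι) :
    Integrable (fun ω => ∏ i ∈ s, X i ω) P := by
  have := hX.isProbabilityMeasure
  classical
  induction s using Finset.induction_on with
  | empty => simp
  | insert a s ha ih =>
    have hindep := hX.indepFun_finsetProd_of_notMem₀ (fun i => (hint i).aemeasurable) ha
    convert hindep.integrable_mul (prod_fn s X ▸ ih) (hint a) using 1
    ext ω
    simp [prod_insert ha, mul_comm]

theorem ProbabilityTheory.iIndepFun.integral_finset_prod (hX : iIndepFun X P)
    (hint : ∀ i, Integrable (X i) P) (s : Finset ι) :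
    ∫ ω, ∏ i ∈ s, X i ω ∂P = ∏ i ∈ s, ∫ ω, X i ω ∂P := by
  have hs : iIndepFun (fun i : s => X i) P := hX.precomp Subtype.val_injective
  simp_rw [← prod_coe_sort s]
  exact hs.integral_fun_prod_eq_prod_integral fun i => (hint i).aestronglyMeasurable

theorem ProbabilityTheory.iIndepFun.measure_iInter_setOf_pos_ne_zero [Fintype ι]
    (hX : iIndepFun X P) (hint : ∀ i, Integrable (X i) P) (hnonneg : ∀ i ω, 0 ≤ X i ω)
    (hpos : ∀ i, 0 < ∫ ω, X i ω ∂P) : P (⋂ i, {ω | 0 < X i ω}) ≠ 0 := by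
  rw [hX.meas_iInter (s := fun i => {ω | 0 < X i ω})
    fun i => ⟨Set.Ioi 0, measurableSet_Ioi, rfl⟩]
  refine prod_ne_zero_iff.2 fun i _ => ?_
  have hsupp : Function.support (X i) = {ω | 0 < X i ω} := by
    ext ω; exact (hnonneg i ω).lt_iff_ne'.symm
  rw [← hsupp]
  exact ((integral_pos_iff_support_of_nonneg (hnonneg i) (hint i)).1 (hpos i)).ne'

end Independence

section OrderStatistics

variable {Ω : Type*} {n : ℕ} {X : Fin n → Ω → ℝ} {k : Fin n} {ω : Ω}

noncomputable def upperIndices (X : Fin n → Ω → ℝ) (k : Fin n) (ω : Ω) : Finset (Fin n) :=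
  (Ici k).map (Tuple.sort fun i => X i ω).toEmbedding

theorem card_upperIndices : #(upperIndices X k ω) = n - k := by
  simp [upperIndices]

theorem orderStat_pow_le_prod_upperIndices (hX : ∀ i, 0 ≤ X i ω) :
    orderStat X k ω ^ (n - k) ≤ ∏ i ∈ upperIndices X k ω, X i ω := by
  rw [upperIndices, prod_map]
  calc orderStat X k ω ^ (n - k) = ∏ _j ∈ Ici k, orderStat X k ω := by
        rw [prod_const, Fin.card_Ici]
    _ ≤ _ := prod_le_prod (fun _ _ => hX _) fun _ hj =>
        Tuple.monotone_sort (fun i => X i ω) (mem_Ici.1 hj)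

theorem orderStat_pow_le_sum_prod (hX : ∀ i, 0 ≤ X i ω) :
    orderStat X k ω ^ (n - k) ≤ ∑ s ∈ univ.powersetCard (n - k), ∏ i ∈ s, X i ω :=
  (orderStat_pow_le_prod_upperIndices hX).trans <|
    single_le_sum (f := fun s => ∏ i ∈ s, X i ω) (fun _ _ => prod_nonneg fun i _ => hX i)
      (mem_powersetCard_univ.2 card_upperIndices)

theorem orderStat_pow_lt_sum_prod (hk : 1 ≤ (k : ℕ)) (hX : ∀ i, 0 < X i ω) :
    orderStat X k ω ^ (n - k) < ∑ s ∈ univ.powersetCard (n - k), ∏ i ∈ s, X i ω := by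
  have hcard : #(upperIndices X k ω) = n - k := card_upperIndices
  obtain ⟨j, -, hj⟩ := exists_mem_notMem_of_card_lt_card (s := upperIndices X k ω)
    (t := univ) (by simp only [hcard, card_univ, Fintype.card_fin]; omega)
  obtain ⟨t, ht, hne⟩ := exists_card_eq_ne (card_pos.1 (by omega)) hj
  exact (orderStat_pow_le_prod_upperIndices fun i => (hX i).le).trans_lt <|
    single_lt_sum (f := fun s => ∏ i ∈ s, X i ω) hne (mem_powersetCard_univ.2 hcard)
      (mem_powersetCard_univ.2 (ht.trans hcard)) (prod_pos fun i _ => hX i)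
      fun _ _ _ => prod_nonneg fun i _ => (hX i).le

end OrderStatistics

theorem moment_orderStat_ne_esymm_of_two_le_general
    {Ω : Type*} [MeasurableSpace Ω] (P : Measure Ω)
    {n : ℕ} (X : Fin n → Ω → ℝ) (μ : Fin n → ℝ)
    (hnonneg : ∀ i ω, 0 ≤ X i ω)
    (hindep : iIndepFun X P)
    (hint : ∀ i, Integrable (X i) P)
    (hmean : ∀ i, ∫ ω, X i ω ∂P = μ i)
    (hpos : ∀ i, 0 < μ i)
    (k : Fin n) (hk : 1 ≤ (k : ℕ)) :
    ∫ ω, (orderStat X k ω) ^ (n - (k : ℕ)) ∂P ≠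
      ∑ s ∈ Finset.univ.powersetCard (n - (k : ℕ)), ∏ i ∈ s, μ i := by
  have := hindep.isProbabilityMeasure
  have hprod_int := hindep.integrable_finset_prod hint
  have hsum : ∫ ω, ∑ s ∈ univ.powersetCard (n - k), ∏ i ∈ s, X i ω ∂P =
      ∑ s ∈ univ.powersetCard (n - k), ∏ i ∈ s, μ i := by
    simp_rw [integral_finsetSum _ fun s _ => hprod_int s, hindep.integral_finset_prod hint, hmean]
  by_cases hI : Integrable (fun ω => orderStat X k ω ^ (n - k)) P
  · refine (hsum ▸ integral_lt_integral_of_ae_le_of_measure_setOf_lt_ne_zero hI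
      (integrable_finsetSum _ fun s _ => hprod_int s)
      (ae_of_all _ fun ω => orderStat_pow_le_sum_prod (hnonneg · ω)) ?_).ne
    exact (hindep.measure_iInter_setOf_pos_ne_zero hint hnonneg fun i => hmean i ▸ hpos i) ∘
      measure_mono_null fun ω hω => orderStat_pow_lt_sum_prod hk (Set.mem_iInter.1 hω)
  · rw [integral_undef hI]
    exact (sum_pos (fun s _ => prod_pos fun i _ => hpos i)
      (powersetCard_nonempty.2 (by simp))).ne

theorem moment_orderStat_ne_esymm_of_two_le
    {Ω : Type*} [MeasurableSpace Ω] (P : Measure Ω) [IsProbabilityMeasure P]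
    {n : ℕ} (X : Fin n → Ω → ℝ) (μ : Fin n → ℝ)
    (hmeas : ∀ i, Measurable (X i))
    (hnonneg : ∀ i ω, 0 ≤ X i ω)
    (hindep : iIndepFun X P)
    (hint : ∀ i, Integrable (X i) P)
    (hmean : ∀ i, ∫ ω, X i ω ∂P = μ i)
    (hpos : ∀ i, 0 < μ i)
    (k : Fin n) (hk : 1 ≤ (k : ℕ)) :
    ∫ ω, (orderStat X k ω) ^ (n - (k : ℕ)) ∂P ≠
      ∑ s ∈ Finset.univ.powersetCard (n - (k : ℕ)), ∏ i ∈ s, μ i :=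
  moment_orderStat_ne_esymm_of_two_le_general P X μ hnonneg hindep hint hmean hpos k hk
end

section
/- Let F be the distribution function of a nonnegative random variable with finite positive mean. Then for all α > 1, α ∫_0^∞ x^{α−1} (1−F(x))^α dx ≤ (∫_0^∞ (1−F(x)) dx)^α, with equality when the variable takes only the values 0 and some x_0 > 0. -/
/-!
Write `S x = ν (x, ∞)` and `G y = ∫₀^y S`. Since `S` is antitone, `y S(y) ≤ G(y)`, hence
`α y^(α-1) S(y)^α = α (y S(y))^(α-1) S(y) ≤ α G(y)^(α-1) S(y)`, and the right-hand side is the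
right derivative of `G^α` because `S` is right-continuous. Integrating over `[0, T]` gives
`α ∫₀^T y^(α-1) S(y)^α dy ≤ G(T)^α ≤ μ^α`, and monotone convergence lets `T → ∞`.
For the two-point law, `S = p` on `[0, x₀)` and `0` beyond, so both sides equal `(x₀ p)^α`.
-/

open MeasureTheory Set ProbabilityTheory
open scoped ENNReal

lemma rpow_sub_one_mul_rpow_le {y s g α : ℝ} (hy : 0 ≤ y) (hs : 0 ≤ s) (hysg : y * s ≤ g)
    (hα : 1 ≤ α) : y ^ (α - 1) * s ^ α ≤ g ^ (α - 1) * s := by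
  have hsα : s ^ α = s ^ (α - 1) * s := by
    rw [← Real.rpow_add_one' hs (by linarith), sub_add_cancel]
  calc y ^ (α - 1) * s ^ α = (y * s) ^ (α - 1) * s := by
        rw [hsα, Real.mul_rpow hy hs, mul_assoc]
    _ ≤ g ^ (α - 1) * s := by gcongr

lemma iUnion_Icc_natCast_eq_Ici (a : ℝ) : ⋃ n : ℕ, Icc a (n : ℝ) = Ici a := by
  ext x
  simp only [mem_iUnion, mem_Icc, mem_Ici]
  exact ⟨fun ⟨_, hx⟩ => hx.1, fun hx => (exists_nat_ge x).imp fun _ hn => ⟨hx, hn⟩⟩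

section Antitone

variable {S : ℝ → ℝ}

lemma Antitone.hasDerivWithinAt_integral_Ioi (hS : Antitone S) {x : ℝ}
    (hx : ContinuousWithinAt S (Ici x) x) (a : ℝ) :
    HasDerivWithinAt (fun y => ∫ t in a..y, S t) (S x) (Ioi x) x :=
  (intervalIntegral.integral_hasDerivWithinAt_right hS.intervalIntegrable
    hS.measurable.stronglyMeasurable.stronglyMeasurableAtFilter (hx.mono Ioi_subset_Ici_self)).mono
    Ioi_subset_Ici_self

lemma Antitone.integrableOn_Icc_rpow_sub_one_mul_rpow (hS : Antitone S) (hS0 : ∀ x, 0 ≤ S x)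
    {α : ℝ} (hα : 1 ≤ α) (T : ℝ) :
    IntegrableOn (fun y => y ^ (α - 1) * S y ^ α) (Icc 0 T) := by
  have hSα : Antitone fun y => S y ^ α := fun a b hab =>
    Real.rpow_le_rpow (hS0 b) (hS hab) (by linarith)
  exact (hSα.antitoneOn _).integrableOn_isCompact isCompact_Icc |>.continuousOn_mul
    (Real.continuous_rpow_const (by linarith)).continuousOn isCompact_Icc

lemma Antitone.mul_integral_rpow_sub_one_mul_rpow_le (hS : Antitone S) (hS0 : ∀ x, 0 ≤ S x)
    (hSc : ∀ x, ContinuousWithinAt S (Ici x) x) {α : ℝ} (hα : 1 ≤ α) {T : ℝ} (hT : 0 ≤ T) :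
    α * ∫ y in (0 : ℝ)..T, y ^ (α - 1) * S y ^ α ≤ (∫ y in (0 : ℝ)..T, S y) ^ α := by
  set G : ℝ → ℝ := fun y => ∫ t in (0 : ℝ)..y, S t
  have hG : Continuous G :=
    intervalIntegral.continuous_primitive (fun _ _ => hS.intervalIntegrable) 0
  have hyS_le : ∀ y, 0 ≤ y → y * S y ≤ G y := fun y hy => by
    simpa using intervalIntegral.integral_mono_on hy intervalIntegrable_const
      (hS.intervalIntegrable (μ := volume)) fun t ht => hS ht.2
  have hderiv : ∀ y ∈ Ioo 0 T,
      HasDerivWithinAt (fun y => G y ^ α) (α * G y ^ (α - 1) * S y) (Ioi y) y := fun y _ =>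
    (Real.hasDerivAt_rpow_const (Or.inr hα)).comp_hasDerivWithinAt y
      (hS.hasDerivWithinAt_integral_Ioi (hSc y) 0)
  have hle : ∀ y ∈ Ioo 0 T, α * (y ^ (α - 1) * S y ^ α) ≤ α * G y ^ (α - 1) * S y :=
    fun y hy => by
      rw [mul_assoc]
      exact mul_le_mul_of_nonneg_left
        (rpow_sub_one_mul_rpow_le hy.1.le (hS0 y) (hyS_le y hy.1.le) hα) (by linarith)
  have := intervalIntegral.integral_le_sub_of_hasDeriv_right_of_le hT
    (hG.rpow_const fun _ => Or.inr (by linarith)).continuousOn hderiv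
    ((hS.integrableOn_Icc_rpow_sub_one_mul_rpow hS0 hα T).const_mul α) hle
  simpa [G, intervalIntegral.integral_const_mul, Real.zero_rpow (by linarith : α ≠ 0)] using this

lemma Antitone.ofReal_mul_setLIntegral_Ici_rpow_sub_one_mul_rpow_le (hS : Antitone S)
    (hS0 : ∀ x, 0 ≤ S x) (hSc : ∀ x, ContinuousWithinAt S (Ici x) x)
    (hint : IntegrableOn S (Ici 0)) {α : ℝ} (hα : 1 ≤ α) :
    ENNReal.ofReal α * ∫⁻ x in Ici (0 : ℝ), ENNReal.ofReal (x ^ (α - 1) * S x ^ α) ≤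
      ENNReal.ofReal ((∫ x in Ici (0 : ℝ), S x) ^ α) := by
  have hmono : Monotone fun n : ℕ => Icc (0 : ℝ) n := fun m n hmn =>
    Icc_subset_Icc_right (Nat.mono_cast hmn)
  rw [← lintegral_const_mul' _ _ ENNReal.ofReal_ne_top, ← iUnion_Icc_natCast_eq_Ici,
    setLIntegral_iUnion_of_directed _ hmono.directed_le, iUnion_Icc_natCast_eq_Ici]
  refine iSup_le fun n => ?_
  have hn : (0 : ℝ) ≤ n := n.cast_nonneg
  have hφ := hS.integrableOn_Icc_rpow_sub_one_mul_rpow hS0 hα n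
  have hφ0 : 0 ≤ᵐ[volume.restrict (Icc 0 (n : ℝ))] fun x => x ^ (α - 1) * S x ^ α :=
    ae_restrict_of_forall_mem measurableSet_Icc fun x hx =>
      mul_nonneg (Real.rpow_nonneg hx.1 _) (Real.rpow_nonneg (hS0 x) _)
  calc ∫⁻ x in Icc 0 (n : ℝ), ENNReal.ofReal α * ENNReal.ofReal (x ^ (α - 1) * S x ^ α)
      = ENNReal.ofReal α * ENNReal.ofReal (∫ x in (0 : ℝ)..n, x ^ (α - 1) * S x ^ α) := by
        rw [lintegral_const_mul' _ _ ENNReal.ofReal_ne_top,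
          ← ofReal_integral_eq_lintegral_ofReal hφ hφ0,
          intervalIntegral.integral_of_le hn, integral_Icc_eq_integral_Ioc]
    _ ≤ ENNReal.ofReal ((∫ x in (0 : ℝ)..n, S x) ^ α) := by
        rw [← ENNReal.ofReal_mul (by linarith)]
        exact ENNReal.ofReal_le_ofReal (hS.mul_integral_rpow_sub_one_mul_rpow_le hS0 hSc hα hn)
    _ ≤ ENNReal.ofReal ((∫ x in Ici (0 : ℝ), S x) ^ α) := by
        refine ENNReal.ofReal_le_ofReal (Real.rpow_le_rpow
          (intervalIntegral.integral_nonneg hn fun x _ => hS0 x) ?_ (by linarith))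
        rw [intervalIntegral.integral_of_le hn]
        exact setIntegral_mono_set hint (.of_forall hS0)
          (Ioc_subset_Icc_self.trans Icc_subset_Ici_self).eventuallyLE

end Antitone

lemma continuousWithinAt_measureReal_Ioi (ν : Measure ℝ) [IsProbabilityMeasure ν] (x : ℝ) :
    ContinuousWithinAt (fun y => ν.real (Ioi y)) (Ici x) x := by
  have h : (fun y => ν.real (Ioi y)) = fun y => 1 - cdf ν y := by
    ext y
    rw [cdf_eq_real, ← compl_Iic, probReal_compl_eq_one_sub measurableSet_Iic]
  rw [h]
  exact continuousWithinAt_const.sub ((cdf ν).right_continuous x)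

lemma measureReal_Ioi_smul_dirac_zero_add_smul_dirac (c : ℝ≥0∞) {p : ℝ} (hp : 0 ≤ p) (x₀ : ℝ)
    {x : ℝ} (hx : 0 ≤ x) :
    (c • Measure.dirac (0 : ℝ) + ENNReal.ofReal p • Measure.dirac x₀).real (Ioi x) =
      (Ico 0 x₀).indicator (fun _ => p) x := by
  have h0 : (0 : ℝ) ∉ Ioi x := not_lt.mpr hx
  by_cases hxx : x < x₀
  · simp [measureReal_def, h0, hxx, hx, ENNReal.toReal_ofReal hp]
  · simp [measureReal_def, h0, hxx, hx]

lemma setIntegral_Ici_indicator_Ico_const {p x₀ : ℝ} (hx₀ : 0 ≤ x₀) :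
    ∫ x in Ici (0 : ℝ), (Ico 0 x₀).indicator (fun _ => p) x = x₀ * p := by
  rw [setIntegral_indicator measurableSet_Ico, inter_eq_self_of_subset_right Ico_subset_Ici_self,
    setIntegral_const, Real.volume_real_Ico_of_le hx₀, sub_zero, smul_eq_mul]

lemma ofReal_mul_setLIntegral_Ici_rpow_sub_one_mul_indicator_rpow {α p x₀ : ℝ} (hα : 1 ≤ α)
    (hp : 0 ≤ p) (hx₀ : 0 ≤ x₀) :
    ENNReal.ofReal α *
        ∫⁻ x in Ici (0 : ℝ),
          ENNReal.ofReal (x ^ (α - 1) * (Ico 0 x₀).indicator (fun _ => p) x ^ α) =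
      ENNReal.ofReal ((x₀ * p) ^ α) := by
  have hα0 : α ≠ 0 := by linarith
  have hpt : ∀ x, ENNReal.ofReal (x ^ (α - 1) * (Ico 0 x₀).indicator (fun _ => p) x ^ α) =
      (Ico 0 x₀).indicator (fun x => ENNReal.ofReal (x ^ (α - 1) * p ^ α)) x := fun x => by
    by_cases hx : x ∈ Ico 0 x₀
    · simp [hx]
    · simp [hx, Real.zero_rpow hα0]
  have hcont : Continuous fun x : ℝ => x ^ (α - 1) * p ^ α :=
    (Real.continuous_rpow_const (by linarith)).mul continuous_const
  have hint : IntegrableOn (fun x : ℝ => x ^ (α - 1) * p ^ α) (Ico 0 x₀) :=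
    (hcont.integrableOn_Icc).mono_set Ico_subset_Icc_self
  simp only [hpt]
  rw [lintegral_indicator measurableSet_Ico, Measure.restrict_restrict measurableSet_Ico,
    inter_eq_self_of_subset_left Ico_subset_Ici_self,
    ← ofReal_integral_eq_lintegral_ofReal hint
      (ae_restrict_of_forall_mem measurableSet_Ico fun x hx =>
        mul_nonneg (Real.rpow_nonneg hx.1 _) (Real.rpow_nonneg hp _)),
    ← ENNReal.ofReal_mul (by linarith), integral_Ico_eq_integral_Ioo,
    ← integral_Ioc_eq_integral_Ioo, ← intervalIntegral.integral_of_le hx₀,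
    intervalIntegral.integral_mul_const, integral_rpow (Or.inl (by linarith)), sub_add_cancel,
    Real.zero_rpow hα0, sub_zero, Real.mul_rpow hx₀ hp]
  congr 1
  field_simp

theorem survival_power_integral_le_general
    (ν : Measure ℝ) [IsProbabilityMeasure ν]
    (μ : ℝ) (hμ : 0 < μ)
    (hmean : ∫ x in Set.Ici (0 : ℝ), (ν (Set.Ioi x)).toReal = μ) :
    (∀ α : ℝ, 1 < α →
      ENNReal.ofReal α *
          ∫⁻ x in Set.Ici (0 : ℝ), ENNReal.ofReal (x ^ (α - 1) * (ν (Set.Ioi x)).toReal ^ α) ≤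
        ENNReal.ofReal (μ ^ α)) ∧
    ∀ α : ℝ, 1 < α → ∀ x₀ : ℝ, 0 < x₀ → ∀ p : ℝ, 0 < p → p ≤ 1 →
      ν = ENNReal.ofReal (1 - p) • Measure.dirac (0 : ℝ) + ENNReal.ofReal p • Measure.dirac x₀ →
        ENNReal.ofReal α *
            ∫⁻ x in Set.Ici (0 : ℝ), ENNReal.ofReal (x ^ (α - 1) * (ν (Set.Ioi x)).toReal ^ α) =
          ENNReal.ofReal (μ ^ α) := by
  refine ⟨fun α hα => ?_, fun α hα x₀ hx₀ p hp _ hν => ?_⟩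
  · have hint : IntegrableOn (fun x => ν.real (Ioi x)) (Ici 0) := by
      by_contra h
      exact hμ.ne' (hmean.symm.trans (integral_undef h))
    rw [← hmean]
    exact Antitone.ofReal_mul_setLIntegral_Ici_rpow_sub_one_mul_rpow_le
      (fun a b hab => measureReal_mono (Ioi_subset_Ioi hab)) (fun _ => measureReal_nonneg)
      (continuousWithinAt_measureReal_Ioi ν) hint hα.le
  · have hS : EqOn (fun x => (ν (Ioi x)).toReal) ((Ico 0 x₀).indicator fun _ => p) (Ici 0) :=
      fun x hx => by
        rw [hν]
        exact measureReal_Ioi_smul_dirac_zero_add_smul_dirac _ hp.le x₀ hx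
    rw [← hmean, setIntegral_congr_fun measurableSet_Ici hS,
      setIntegral_Ici_indicator_Ico_const hx₀.le,
      ← ofReal_mul_setLIntegral_Ici_rpow_sub_one_mul_indicator_rpow hα.le hp.le hx₀.le]
    congr 1
    exact setLIntegral_congr_fun measurableSet_Ici fun x hx =>
      congrArg (fun s => ENNReal.ofReal (x ^ (α - 1) * s ^ α)) (hS hx)

theorem survival_power_integral_le
    (ν : Measure ℝ) [IsProbabilityMeasure ν]
    (hnonneg : ∀ᵐ x ∂ν, 0 ≤ x)
    (μ : ℝ) (hμ : 0 < μ)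
    (hmean : ∫ x in Set.Ici (0 : ℝ), (ν (Set.Ioi x)).toReal = μ) :
    (∀ α : ℝ, 1 < α →
      ENNReal.ofReal α *
          ∫⁻ x in Set.Ici (0 : ℝ), ENNReal.ofReal (x ^ (α - 1) * (ν (Set.Ioi x)).toReal ^ α) ≤
        ENNReal.ofReal (μ ^ α)) ∧
    ∀ α : ℝ, 1 < α → ∀ x₀ : ℝ, 0 < x₀ → ∀ p : ℝ, 0 < p → p ≤ 1 →
      ν = ENNReal.ofReal (1 - p) • Measure.dirac (0 : ℝ) + ENNReal.ofReal p • Measure.dirac x₀ →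
        ENNReal.ofReal α *
            ∫⁻ x in Set.Ici (0 : ℝ), ENNReal.ofReal (x ^ (α - 1) * (ν (Set.Ioi x)).toReal ^ α) =
          ENNReal.ofReal (μ ^ α) :=
  survival_power_integral_le_general ν μ hμ hmean
end

section
/- If X is a nonnegative random variable with E[X^{1/n}] < ∞ for some positive integer n, and X_1,...,X_N are iid copies of X with N ≥ n, then E[min{X_1,...,X_N}] ≤ (E[X^{1/n}])^n. -/
/-!
Keep only the first `n` copies `Y₀, …, Y_{n-1}`. Their minimum is at most their geometric mean
`∏ⱼ Yⱼ ^ (1/n)`, and by independence the expectation of that product is `∏ⱼ E[Yⱼ ^ (1/n)]`,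
which is `E[X ^ (1/n)] ^ n` since the copies are identically distributed.
-/

open MeasureTheory ProbabilityTheory

theorem le_prod_rpow_inv_card {ι : Type*} [Fintype ι] [Nonempty ι] {m : ℝ} {y : ι → ℝ}
    (hm : 0 ≤ m) (hy : ∀ i, m ≤ y i) : m ≤ ∏ i, y i ^ ((Fintype.card ι : ℝ)⁻¹) :=
  calc m = ∏ _i : ι, m ^ ((Fintype.card ι : ℝ)⁻¹) := by
        rw [Finset.prod_const, Finset.card_univ, ← Real.rpow_mul_natCast hm,
          inv_mul_cancel₀ (by positivity), Real.rpow_one]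
    _ ≤ ∏ i, y i ^ ((Fintype.card ι : ℝ)⁻¹) :=
        Finset.prod_le_prod (fun _ _ => by positivity)
          fun i _ => Real.rpow_le_rpow hm (hy i) (by positivity)

theorem ProbabilityTheory.iIndepFun.integrable_finsetProd {Ω ι : Type*} [MeasurableSpace Ω]
    {μ : Measure Ω} {X : ι → Ω → ℝ} (hX : iIndepFun X μ) (hint : ∀ i, Integrable (X i) μ)
    (s : Finset ι) : Integrable (∏ i ∈ s, X i) μ := by
  classical
  have := hX.isProbabilityMeasure
  induction s using Finset.induction_on with
  | empty => exact integrable_const (1 : ℝ)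
  | insert i s hi ih =>
    rw [Finset.prod_insert hi, mul_comm]
    exact (hX.indepFun_finsetProd_of_notMem₀ (fun j => (hint j).aemeasurable) hi).integrable_mul
      ih (hint i)

theorem integral_min_le_pow_integral_rpow_general
    {Ω : Type*} [MeasurableSpace Ω] (P : Measure Ω) [IsProbabilityMeasure P]
    (X : Ω → ℝ) (hXnonneg : ∀ ω, 0 ≤ X ω)
    (n : ℕ) (hn : 1 ≤ n)
    (hint : Integrable (fun ω => X ω ^ ((n : ℝ)⁻¹)) P)
    (N : ℕ) (hNn : n ≤ N)
    (Y : Fin N → Ω → ℝ)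
    (hindep : iIndepFun Y P)
    (hident : ∀ i, IdentDistrib (Y i) X P P) :
    ∫ ω, (⨅ i, Y i ω) ∂P ≤ (∫ ω, X ω ^ ((n : ℝ)⁻¹) ∂P) ^ n := by
  have : NeZero n := ⟨by omega⟩
  set Z : Fin n → Ω → ℝ := fun j ω => Y (Fin.castLE hNn j) ω ^ ((n : ℝ)⁻¹)
  have hpow : Measurable fun x : ℝ => x ^ ((n : ℝ)⁻¹) := measurable_id.pow_const _
  have hZident : ∀ j, IdentDistrib (Z j) (fun ω => X ω ^ ((n : ℝ)⁻¹)) P P :=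
    fun j => (hident _).comp hpow
  have hZint : ∀ j, Integrable (Z j) P := fun j => (hZident j).integrable_iff.2 hint
  have hZindep : iIndepFun Z P :=
    (hindep.precomp (Fin.castLE_injective hNn)).comp _ fun _ => hpow
  have hYnonneg : ∀ᵐ ω ∂P, ∀ i, 0 ≤ Y i ω :=
    ae_all_iff.2 fun i => (hident i).symm.ae_mem_snd measurableSet_Ici (ae_of_all _ hXnonneg)
  have hmin_le : ∀ᵐ ω ∂P, ⨅ i, Y i ω ≤ ∏ j, Z j ω := by
    filter_upwards [hYnonneg] with ω hω
    simpa [Z] using le_prod_rpow_inv_card (Real.iInf_nonneg hω)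
      fun j => ciInf_le (Finite.bddBelow_range _) (Fin.castLE hNn j)
  calc ∫ ω, ⨅ i, Y i ω ∂P ≤ ∫ ω, ∏ j, Z j ω ∂P :=
        integral_mono_of_nonneg (hYnonneg.mono fun ω hω => Real.iInf_nonneg hω)
          (by simpa only [← Finset.prod_apply] using hZindep.integrable_finsetProd hZint _) hmin_le
    _ = ∏ j, ∫ ω, Z j ω ∂P :=
        hZindep.integral_fun_prod_eq_prod_integral fun j => (hZint j).aestronglyMeasurable
    _ = (∫ ω, X ω ^ ((n : ℝ)⁻¹) ∂P) ^ n := by simp [(hZident _).integral_eq]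

theorem integral_min_le_pow_integral_rpow
    {Ω : Type*} [MeasurableSpace Ω] (P : Measure Ω) [IsProbabilityMeasure P]
    (X : Ω → ℝ) (hXmeas : Measurable X) (hXnonneg : ∀ ω, 0 ≤ X ω)
    (n : ℕ) (hn : 1 ≤ n)
    (hint : Integrable (fun ω => X ω ^ ((n : ℝ)⁻¹)) P)
    (N : ℕ) (hNn : n ≤ N)
    (Y : Fin N → Ω → ℝ)
    (hYmeas : ∀ i, Measurable (Y i))
    (hindep : iIndepFun Y P)
    (hident : ∀ i, IdentDistrib (Y i) X P P) :
    ∫ ω, (⨅ i, Y i ω) ∂P ≤ (∫ ω, X ω ^ ((n : ℝ)⁻¹) ∂P) ^ n :=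
  integral_min_le_pow_integral_rpow_general P X hXnonneg n hn hint N hNn Y hindep hident
end
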